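/- arXiv:2602.17432 — 4 statements merged into one kernel-verified Lean document; each statement's English description precedes it below -/
import Mathlib

section
/- Let Δ ⊆ [0,1] be the ternary Cantor set, write Δ₋ = Δ ∩ [0, 1/3] and Δ₊ = Δ ∩ [2/3, 1], and set J₊ = {f ∈ C(Δ) : f vanishes on Δ₋} and J₋ = {f ∈ C(Δ) : f vanishes on Δ₊}. Let Y be a real Banach space and Ω : C(Δ) → Y a quasi-linear map with quasi-linearity constant Q. If Ω is M-trivial on J₊ and N-trivial on J₋, then Ω is (M + N + 2Q)-trivial on all of C(Δ). -/
open scoped ZeroAtInfty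

/-- `Ω` is quasi-linear with constant `Q`: it is homogeneous and satisfies the
quasi-additivity estimate. -/
def IsQuasiLinearWith {X Y : Type*} [NormedAddCommGroup X] [NormedSpace ℝ X]
    [NormedAddCommGroup Y] [NormedSpace ℝ Y] (Ω : X → Y) (Q : ℝ) : Prop :=
  (∀ (c : ℝ) (x : X), Ω (c • x) = c • Ω x) ∧
  ∀ x y : X, ‖Ω (x + y) - Ω x - Ω y‖ ≤ Q * (‖x‖ + ‖y‖)

/-- `Ω` is `lam`-trivial on the subspace `F`. -/
def IsTrivialOn {X Y : Type*} [NormedAddCommGroup X] [NormedSpace ℝ X]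
    [NormedAddCommGroup Y] [NormedSpace ℝ Y] (Ω : X → Y) (lam : ℝ)
    (F : Submodule ℝ X) : Prop :=
  ∃ L : F →ₗ[ℝ] Y, ∀ x : F, ‖Ω (x : X) - L x‖ ≤ lam * ‖(x : X)‖

/-- `Ω` is locally trivial on the subspace `Z`: some constant `lam` works for all
finite-dimensional subspaces of `Z`. -/
def IsLocallyTrivialOn {X Y : Type*} [NormedAddCommGroup X] [NormedSpace ℝ X]
    [NormedAddCommGroup Y] [NormedSpace ℝ Y] (Ω : X → Y) (Z : Submodule ℝ X) : Prop :=
  ∃ lam : ℝ, ∀ F : Submodule ℝ X, F ≤ Z → FiniteDimensional ℝ F → IsTrivialOn Ω lam F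

instance : CompactSpace cantorSet := isCompact_iff_compactSpace.mp isCompact_cantorSet

/-- The subspace of continuous functions on `K` vanishing on a subset `s`. -/
def vanishingOn (K : Type*) [TopologicalSpace K] [CompactSpace K] (s : Set K) :
    Submodule ℝ C(K, ℝ) where
  carrier := {f | ∀ x ∈ s, f x = 0}
  add_mem' := fun hf hg x hx => by simp [hf x hx, hg x hx]
  zero_mem' := fun x _ => rfl
  smul_mem' := fun c f hf x hx => by simp [hf x hx]


lemma one_mem_preCantorSet' (n : ℕ) : (1:ℝ) ∈ preCantorSet n := by
  induction n with
  | zero => simp [preCantorSet]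
  | succ n ih => exact Or.inr ⟨1, ih, by norm_num⟩

lemma one_mem_cantorSet' : (1:ℝ) ∈ cantorSet := Set.mem_iInter.mpr one_mem_preCantorSet'

lemma cantorSet_split {x : ℝ} (hx : x ∈ cantorSet) : x ≤ 1/3 ∨ 2/3 ≤ x := by
  have h1 : x ∈ preCantorSet 1 := Set.mem_iInter.mp hx 1
  rcases h1 with ⟨y, hy, rfl⟩ | ⟨y, hy, rfl⟩ <;> simp only [preCantorSet_zero, Set.mem_Icc] at hy
  · left; linarith [hy.2]
  · right; linarith [hy.1]

lemma frontier_half : frontier {x : cantorSet | (x : ℝ) < 1/2} = ∅ := by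
  have heq : {x : cantorSet | (x : ℝ) < 1/2} = {x : cantorSet | (x : ℝ) ≤ 1/3} := by
    ext x
    simp only [Set.mem_setOf_eq]
    constructor
    · intro h
      rcases cantorSet_split x.2 with h' | h'
      · exact h'
      · linarith
    · intro h; linarith
  have hopen : IsOpen {x : cantorSet | (x : ℝ) < 1/2} :=
    isOpen_Iio.preimage continuous_subtype_val
  have hclosed : IsClosed {x : cantorSet | (x : ℝ) < 1/2} := by
    rw [heq]; exact isClosed_Iic.preimage continuous_subtype_val
  exact (isClopen_iff_frontier_eq_empty.mp ⟨hclosed, hopen⟩)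

noncomputable def cutL : C(cantorSet, ℝ) →ₗ[ℝ] C(cantorSet, ℝ) where
  toFun f := ⟨fun x => if (x : ℝ) < 1/2 then f x else 0, by
    apply Continuous.if
    · intro a ha; rw [frontier_half] at ha; exact absurd ha (Set.notMem_empty a)
    · exact f.continuous
    · exact continuous_const⟩
  map_add' f g := by ext x; simp only [ContinuousMap.coe_mk, ContinuousMap.add_apply]
                     split <;> simp
  map_smul' c f := by ext x; simp only [ContinuousMap.coe_mk, ContinuousMap.smul_apply,
                        RingHom.id_apply]
                      split <;> simp

lemma cutL_apply (f : C(cantorSet, ℝ)) (x : cantorSet) :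
    cutL f x = if (x : ℝ) < 1/2 then f x else 0 := rfl

lemma norm_cutL_le (f : C(cantorSet, ℝ)) : ‖cutL f‖ ≤ ‖f‖ := by
  apply (ContinuousMap.norm_le _ (norm_nonneg f)).mpr
  intro x
  rw [cutL_apply]
  split
  · exact f.norm_coe_le_norm x
  · simp

lemma norm_sub_cutL_le (f : C(cantorSet, ℝ)) : ‖f - cutL f‖ ≤ ‖f‖ := by
  apply (ContinuousMap.norm_le _ (norm_nonneg f)).mpr
  intro x
  rw [ContinuousMap.sub_apply, cutL_apply]
  split
  · simp
  · simpa using f.norm_coe_le_norm x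

lemma cutL_mem (f : C(cantorSet, ℝ)) :
    cutL f ∈ vanishingOn cantorSet {x | (x : ℝ) ∈ Set.Icc (2/3) 1} := by
  intro x hx
  rw [cutL_apply, if_neg]
  push_neg
  linarith [hx.1]

lemma sub_cutL_mem (f : C(cantorSet, ℝ)) :
    f - cutL f ∈ vanishingOn cantorSet {x | (x : ℝ) ∈ Set.Icc 0 (1/3)} := by
  intro x hx
  rw [ContinuousMap.sub_apply, cutL_apply, if_pos (by linarith [hx.2]), sub_self]


theorem claim_halves {Y : Type*} [NormedAddCommGroup Y] [NormedSpace ℝ Y]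
    [CompleteSpace Y] (Ω : C(cantorSet, ℝ) → Y) (Q M N : ℝ) (hQ : 0 ≤ Q)
    (hΩ : IsQuasiLinearWith Ω Q)
    (hplus : IsTrivialOn Ω M (vanishingOn cantorSet {x | (x : ℝ) ∈ Set.Icc 0 (1/3)}))
    (hminus : IsTrivialOn Ω N (vanishingOn cantorSet {x | (x : ℝ) ∈ Set.Icc (2/3) 1})) :
    IsTrivialOn Ω (M + N + 2 * Q) (⊤ : Submodule ℝ C(cantorSet, ℝ)) := by
  obtain ⟨Lp, hLp⟩ := hplus
  obtain ⟨Lm, hLm⟩ := hminus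
  have Jp_def : True := trivial
  -- M ≥ 0 and N ≥ 0 from nonzero witnesses
  have hM : 0 ≤ M := by
    set g : C(cantorSet, ℝ) := 1 - cutL 1 with hg
    have hmem : g ∈ vanishingOn cantorSet {x | (x : ℝ) ∈ Set.Icc 0 (1/3)} := sub_cutL_mem 1
    have hval : g ⟨1, one_mem_cantorSet'⟩ = 1 := by
      norm_num [hg, ContinuousMap.sub_apply, cutL_apply]
    have hn : (1:ℝ) ≤ ‖g‖ := by
      calc (1:ℝ) = ‖g ⟨1, one_mem_cantorSet'⟩‖ := by rw [hval]; simp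
        _ ≤ ‖g‖ := g.norm_coe_le_norm _
    have h0 := hLp ⟨g, hmem⟩
    have h1 : (0:ℝ) ≤ M * ‖g‖ := le_trans (norm_nonneg _) h0
    nlinarith
  have hN : 0 ≤ N := by
    set g : C(cantorSet, ℝ) := cutL 1 with hg
    have hmem : g ∈ vanishingOn cantorSet {x | (x : ℝ) ∈ Set.Icc (2/3) 1} := cutL_mem 1
    have hval : g ⟨0, zero_mem_cantorSet⟩ = 1 := by
      norm_num [hg, cutL_apply]
    have hn : (1:ℝ) ≤ ‖g‖ := by
      calc (1:ℝ) = ‖g ⟨0, zero_mem_cantorSet⟩‖ := by rw [hval]; simp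
        _ ≤ ‖g‖ := g.norm_coe_le_norm _
    have h0 := hLm ⟨g, hmem⟩
    have h1 : (0:ℝ) ≤ N * ‖g‖ := le_trans (norm_nonneg _) h0
    nlinarith
  let toJm : C(cantorSet, ℝ) →ₗ[ℝ] (vanishingOn cantorSet {x | (x : ℝ) ∈ Set.Icc (2/3) 1}) := cutL.codRestrict _ cutL_mem
  let toJp : C(cantorSet, ℝ) →ₗ[ℝ] (vanishingOn cantorSet {x | (x : ℝ) ∈ Set.Icc 0 (1/3)}) :=
    (LinearMap.id - cutL).codRestrict _ (fun f => sub_cutL_mem f)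
  refine ⟨(Lm ∘ₗ toJm ∘ₗ (⊤ : Submodule ℝ C(cantorSet, ℝ)).subtype) +
          (Lp ∘ₗ toJp ∘ₗ (⊤ : Submodule ℝ C(cantorSet, ℝ)).subtype), ?_⟩
  intro x
  set f : C(cantorSet, ℝ) := (x : C(cantorSet, ℝ)) with hf
  set fm := cutL f with hfm
  set fp := f - cutL f with hfp
  have hsplit : f = fm + fp := by rw [hfm, hfp]; abel
  have hq := hΩ.2 fm fp
  rw [← hsplit] at hq
  have h1 : ‖Ω fm - Lm (toJm f)‖ ≤ N * ‖fm‖ := hLm (toJm f)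
  have h2 : ‖Ω fp - Lp (toJp f)‖ ≤ M * ‖fp‖ := hLp (toJp f)
  have hnm : ‖fm‖ ≤ ‖f‖ := norm_cutL_le f
  have hnp : ‖fp‖ ≤ ‖f‖ := norm_sub_cutL_le f
  have happ : ((Lm ∘ₗ toJm ∘ₗ (⊤ : Submodule ℝ C(cantorSet, ℝ)).subtype) +
      (Lp ∘ₗ toJp ∘ₗ (⊤ : Submodule ℝ C(cantorSet, ℝ)).subtype)) x
      = Lm (toJm f) + Lp (toJp f) := rfl
  calc ‖Ω f - ((Lm ∘ₗ toJm ∘ₗ (⊤ : Submodule ℝ C(cantorSet, ℝ)).subtype) +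
      (Lp ∘ₗ toJp ∘ₗ (⊤ : Submodule ℝ C(cantorSet, ℝ)).subtype)) x‖
      = ‖(Ω f - Ω fm - Ω fp) + (Ω fm - Lm (toJm f)) + (Ω fp - Lp (toJp f))‖ := by
        rw [happ]; congr 1; abel
    _ ≤ ‖(Ω f - Ω fm - Ω fp) + (Ω fm - Lm (toJm f))‖ + ‖Ω fp - Lp (toJp f)‖ :=
        norm_add_le _ _
    _ ≤ ‖Ω f - Ω fm - Ω fp‖ + ‖Ω fm - Lm (toJm f)‖ + ‖Ω fp - Lp (toJp f)‖ := by
        gcongr; exact norm_add_le _ _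
    _ ≤ Q * (‖fm‖ + ‖fp‖) + N * ‖fm‖ + M * ‖fp‖ := add_le_add (add_le_add hq h1) h2
    _ ≤ (M + N + 2 * Q) * ‖f‖ := by nlinarith [norm_nonneg f]
end

section
/- Let K be a compact Hausdorff topological space, Y a real Banach space, and Ω : C(K) → Y a quasi-linear map which is not locally trivial. Then there exist a compact metrizable topological space H and a linear isometric embedding T : C(H) → C(K) such that Ω ∘ T : C(H) → Y is not locally trivial. -/
open scoped ZeroAtInfty

theorem reduction_to_metrizable {K : Type*} [TopologicalSpace K] [CompactSpace K] [T2Space K]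
    {Y : Type*} [NormedAddCommGroup Y] [NormedSpace ℝ Y] [CompleteSpace Y]
    (Ω : C(K, ℝ) → Y) (hΩ : ∃ Q : ℝ, 0 ≤ Q ∧ IsQuasiLinearWith Ω Q)
    (hnt : ¬ IsLocallyTrivialOn Ω (⊤ : Submodule ℝ C(K, ℝ))) :
    ∃ (H : Type) (_ : TopologicalSpace H) (_ : CompactSpace H)
      (_ : TopologicalSpace.MetrizableSpace H) (T : C(H, ℝ) →ₗ[ℝ] C(K, ℝ)),
      (∀ f : C(H, ℝ), ‖T f‖ = ‖f‖) ∧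
      ¬ IsLocallyTrivialOn (Ω ∘ T) (⊤ : Submodule ℝ C(H, ℝ)) := by
  classical
  rw [IsLocallyTrivialOn] at hnt
  push_neg at hnt
  choose F hFle hFfin hFnt using fun n : ℕ => hnt (n : ℝ)
  -- finite spanning sets
  have hfg : ∀ n, (F n).FG := fun n =>
    ((F n).fg_iff_finiteDimensional).mpr (hFfin n)
  choose s hs using hfg
  -- countable set containing all the spanning vectors
  set S : Set C(K, ℝ) := insert 0 (⋃ n, (s n : Set C(K, ℝ))) with hS
  have hScnt : S.Countable :=
    (Set.countable_iUnion fun n => (s n).countable_toSet).insert 0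
  obtain ⟨g, hg⟩ := hScnt.exists_eq_range ⟨0, Set.mem_insert 0 _⟩
  -- the map into ℝ^ℕ
  set φ : K → ℕ → ℝ := fun k i => (‖g i‖ + 1)⁻¹ * g i k with hφdef
  have hφcont : Continuous φ :=
    continuous_pi fun i => continuous_const.mul (g i).continuous
  set H : Set (ℕ → ℝ) := Set.range φ with hHdef
  have hHcs : CompactSpace H :=
    isCompact_iff_compactSpace.mp (isCompact_range hφcont)
  -- the continuous map K → H
  set φ' : C(K, H) := ⟨fun k => ⟨φ k, ⟨k, rfl⟩⟩, hφcont.subtype_mk _⟩ with hφ'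
  -- the isometric embedding
  set T : C(H, ℝ) →ₗ[ℝ] C(K, ℝ) :=
    { toFun := fun f => f.comp φ'
      map_add' := fun f₁ f₂ => by ext k; simp
      map_smul' := fun c f => by ext k; simp } with hT
  have hTiso : ∀ f : C(H, ℝ), ‖T f‖ = ‖f‖ := by
    intro f
    apply le_antisymm
    · exact (ContinuousMap.norm_le _ (norm_nonneg f)).mpr fun k =>
        f.norm_coe_le_norm (φ' k)
    · refine (ContinuousMap.norm_le _ (norm_nonneg _)).mpr fun h => ?_
      obtain ⟨k, hk⟩ := h.2
      have : f h = (T f) k := by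
        simp only [hT, LinearMap.coe_mk, AddHom.coe_mk, ContinuousMap.comp_apply]
        exact congrArg f (Subtype.ext hk.symm)
      rw [this]
      exact (T f).norm_coe_le_norm k
  have hTinj : Function.Injective T := by
    intro a b hab
    have : ‖T (a - b)‖ = ‖a - b‖ := hTiso _
    rw [map_sub, hab, sub_self, norm_zero] at this
    exact sub_eq_zero.mp (norm_eq_zero.mp this.symm)
  -- each g i is in the range of T
  have hgrange : ∀ i, g i ∈ LinearMap.range T := by
    intro i
    have hne : (‖g i‖ + 1) ≠ 0 := by positivity
    refine ⟨⟨fun h => (‖g i‖ + 1) * (h : ℕ → ℝ) i,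
      continuous_const.mul ((continuous_apply i).comp continuous_subtype_val)⟩, ?_⟩
    ext k
    simp only [hT, LinearMap.coe_mk, AddHom.coe_mk, ContinuousMap.comp_apply,
      ContinuousMap.coe_mk, hφ', hφdef]
    field_simp
  have hFrange : ∀ n, F n ≤ LinearMap.range T := by
    intro n
    rw [← hs n, Submodule.span_le]
    intro x hx
    have hxS : x ∈ S := Set.mem_insert_of_mem _ (Set.mem_iUnion.mpr ⟨n, hx⟩)
    rw [hg] at hxS
    obtain ⟨i, hi⟩ := hxS
    exact hi ▸ hgrange i
  -- conclude
  refine ⟨H, inferInstance, hHcs, inferInstance, T, hTiso, ?_⟩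
  rintro ⟨lam, hl⟩
  obtain ⟨n, hn⟩ := exists_nat_ge lam
  apply hFnt n
  -- pull back F n
  set G : Submodule ℝ C(H, ℝ) := (F n).comap T with hG
  have hmaps : ∀ x ∈ G, T x ∈ F n := fun x hx => hx
  set Tres : G →ₗ[ℝ] F n := T.restrict hmaps with hTres
  have hbij : Function.Bijective Tres := by
    constructor
    · intro a b hab
      exact Subtype.ext (hTinj (congrArg Subtype.val hab))
    · rintro ⟨y, hy⟩
      obtain ⟨x, hx⟩ := hFrange n hy
      exact ⟨⟨x, show T x ∈ F n from hx ▸ hy⟩, Subtype.ext hx⟩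
  set e : G ≃ₗ[ℝ] F n := LinearEquiv.ofBijective Tres hbij with he
  haveI : FiniteDimensional ℝ G := Module.Finite.equiv e.symm
  obtain ⟨L, hL⟩ := hl G le_top inferInstance
  refine ⟨L.comp e.symm.toLinearMap, fun y => ?_⟩
  have hy1 : T ((e.symm y : G) : C(H, ℝ)) = (y : C(K, ℝ)) :=
    congrArg Subtype.val (e.apply_symm_apply y)
  have hy2 : ‖((e.symm y : G) : C(H, ℝ))‖ = ‖(y : C(K, ℝ))‖ := by
    rw [← hTiso, hy1]
  calc ‖Ω (y : C(K, ℝ)) - (L.comp e.symm.toLinearMap) y‖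
      = ‖(Ω ∘ T) ((e.symm y : G) : C(H, ℝ)) - L (e.symm y)‖ := by
        simp only [Function.comp_apply, hy1, LinearMap.coe_comp,
          LinearEquiv.coe_coe]
    _ ≤ lam * ‖((e.symm y : G) : C(H, ℝ))‖ := hL (e.symm y)
    _ = lam * ‖(y : C(K, ℝ))‖ := by rw [hy2]
    _ ≤ (n : ℝ) * ‖(y : C(K, ℝ))‖ :=
        mul_le_mul_of_nonneg_right hn (norm_nonneg _)
end

section
/- Let K be a compact Hausdorff topological space, Y a real Banach space, and Ω : C(K) → Y a quasi-linear map. Suppose (Eₙ)ₙ∈ℕ is a sequence of finite-dimensional linear subspaces of C(K) such that: (i) every f ∈ Eₘ and g ∈ Eₙ with m ≠ n have disjoint supports (i.e. f·g = 0); (ii) each Eₙ is linearly isometric to ℓ∞^{mₙ} for some mₙ ∈ ℕ; and (iii) for each n, Ω is not n-trivial on Eₙ. Then the closed linear span X of ⋃ₙ Eₙ is isomorphic as a Banach space to c₀, and the restriction of Ω to X is not locally trivial. -/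
open scoped ZeroAtInfty
open Filter Topology ZeroAtInftyContinuousMap


section helpers
variable {K : Type*} [TopologicalSpace K] [CompactSpace K]
variable {K : Type*} [TopologicalSpace K] [CompactSpace K]

/-- Norm bound for sums of pairwise disjointly supported continuous functions. -/
theorem disj_sum_norm_le (s : Finset ℕ) (f : ℕ → C(K, ℝ))
    (hd : ∀ i ∈ s, ∀ j ∈ s, i ≠ j → f i * f j = 0)
    {B : ℝ} (hB : 0 ≤ B) (h : ∀ i ∈ s, ‖f i‖ ≤ B) :
    ‖∑ i ∈ s, f i‖ ≤ B := by
  rw [ContinuousMap.norm_le _ hB]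
  intro x
  by_cases hx : ∃ k ∈ s, f k x ≠ 0
  · obtain ⟨k, hk, hkx⟩ := hx
    have hsum : (∑ i ∈ s, f i) x = f k x := by
      rw [ContinuousMap.sum_apply]
      refine Finset.sum_eq_single_of_mem k hk fun j hj hne => ?_
      have := hd j hj k hk hne
      have := congrFun (congrArg (DFunLike.coe) this) x
      simp only [ContinuousMap.mul_apply, ContinuousMap.zero_apply] at this
      exact (mul_eq_zero.mp this).resolve_right hkx
    rw [hsum]
    exact le_trans ((f k).norm_coe_le_norm x) (h k hk)
  · push_neg at hx
    have : (∑ i ∈ s, f i) x = 0 := by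
      rw [ContinuousMap.sum_apply]
      exact Finset.sum_eq_zero fun i hi => hx i hi
    rw [this]; simpa using hB

theorem disj_le_sum_norm (s : Finset ℕ) (f : ℕ → C(K, ℝ))
    (hd : ∀ i ∈ s, ∀ j ∈ s, i ≠ j → f i * f j = 0)
    {k : ℕ} (hk : k ∈ s) : ‖f k‖ ≤ ‖∑ i ∈ s, f i‖ := by
  rcases le_or_gt ‖f k‖ 0 with h0 | h0
  · exact h0.trans (norm_nonneg _)
  · -- f k ≠ 0, so K is nonempty and the norm is attained
    have hne : ∃ x : K, f k x ≠ 0 := by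
      by_contra h
      push_neg at h
      have : f k = 0 := ContinuousMap.ext fun x => h x
      rw [this] at h0; simp at h0
    obtain ⟨x0, hx0⟩ := hne
    haveI : Nonempty K := ⟨x0⟩
    obtain ⟨x, -, hx⟩ := isCompact_univ.exists_isMaxOn Set.univ_nonempty
      ((map_continuous (f k)).norm.continuousOn)
    have hnorm : ‖f k‖ = ‖f k x‖ := by
      refine le_antisymm ?_ ((f k).norm_coe_le_norm x)
      rw [ContinuousMap.norm_le _ (norm_nonneg _)]
      exact fun y => hx (Set.mem_univ y)
    have hxne : f k x ≠ 0 := by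
      intro h
      rw [hnorm, h] at h0; simp at h0
    have hsum : (∑ i ∈ s, f i) x = f k x := by
      rw [ContinuousMap.sum_apply]
      refine Finset.sum_eq_single_of_mem k hk fun j hj hne => ?_
      have := hd j hj k hk hne
      have := congrFun (congrArg (DFunLike.coe) this) x
      simp only [ContinuousMap.mul_apply, ContinuousMap.zero_apply] at this
      exact (mul_eq_zero.mp this).resolve_right hxne
    calc ‖f k‖ = ‖(∑ i ∈ s, f i) x‖ := by rw [hnorm, hsum]
    _ ≤ ‖∑ i ∈ s, f i‖ := ContinuousMap.norm_coe_le_norm _ x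

end helpers

section blocks
variable {K : Type*} [TopologicalSpace K] [CompactSpace K]
variable (E : ℕ → Submodule ℝ C(K, ℝ)) (m : ℕ → ℕ)
variable (eqv : ∀ n, E n ≃ₗᵢ[ℝ] (Fin (m n) → ℝ))

noncomputable def psi (n : ℕ) : (Fin (m n) → ℝ) →ₗᵢ[ℝ] C(K, ℝ) :=
  (E n).subtypeₗᵢ.comp (eqv n).symm.toLinearIsometry

theorem psi_mem (n : ℕ) (v : Fin (m n) → ℝ) : psi E m eqv n v ∈ E n := by
  simp only [psi, LinearIsometry.coe_comp, Function.comp_apply,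
    Submodule.coe_subtypeₗᵢ]
  exact SetLike.coe_mem _

def blk (a : C₀((Σ n, Fin (m n)), ℝ)) (n : ℕ) : Fin (m n) → ℝ := fun i => a ⟨n, i⟩

theorem blk_norm_le (a : C₀((Σ n, Fin (m n)), ℝ)) (n : ℕ) : ‖blk m a n‖ ≤ ‖a‖ := by
  refine (pi_norm_le_iff_of_nonneg (norm_nonneg a)).2 fun i => ?_
  calc ‖a ⟨n, i⟩‖ = ‖a.toBCF ⟨n, i⟩‖ := rfl
  _ ≤ ‖a.toBCF‖ := a.toBCF.norm_coe_le_norm _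
  _ = ‖a‖ := norm_toBCF_eq_norm

noncomputable def gfun (a : C₀((Σ n, Fin (m n)), ℝ)) (n : ℕ) : C(K, ℝ) :=
  psi E m eqv n (blk m a n)

theorem gfun_mem (a) (n : ℕ) : gfun E m eqv a n ∈ E n := psi_mem E m eqv n _

theorem gfun_norm (a) (n : ℕ) : ‖gfun E m eqv a n‖ = ‖blk m a n‖ :=
  (psi E m eqv n).norm_map _


variable (hdisj : ∀ m n, m ≠ n → ∀ f ∈ E m, ∀ g ∈ E n, f * g = 0)

include hdisj

theorem gfun_disj (a : C₀((Σ n, Fin (m n)), ℝ)) {i j : ℕ} (hij : i ≠ j) :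
    gfun E m eqv a i * gfun E m eqv a j = 0 :=
  hdisj i j hij _ (gfun_mem E m eqv a i) _ (gfun_mem E m eqv a j)

theorem gfun_summable (a : C₀((Σ n, Fin (m n)), ℝ)) :
    Summable (gfun E m eqv a) := by
  rw [summable_iff_vanishing]
  intro e he
  obtain ⟨ε, hε, hball⟩ := Metric.mem_nhds_iff.mp he
  have hev : ∀ᶠ x in cocompact (Σ n, Fin (m n)), ‖a x‖ < ε / 2 := by
    have := Metric.tendsto_nhds.mp (zero_at_infty a) (ε / 2) (by linarith)
    simpa [dist_zero_right] using this
  obtain ⟨C, hC, hCx⟩ := hasBasis_cocompact.eventually_iff.mp hev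
  refine ⟨hC.finite_of_discrete.toFinset.image Sigma.fst, fun t ht => ?_⟩
  apply hball
  rw [Metric.mem_ball, dist_zero_right]
  have hle : ‖∑ i ∈ t, gfun E m eqv a i‖ ≤ ε / 2 := by
    refine disj_sum_norm_le t _ (fun i _ j _ hij => gfun_disj E m eqv hdisj a hij)
      (by linarith) fun n hn => ?_
    rw [gfun_norm]
    refine (pi_norm_le_iff_of_nonneg (by linarith)).2 fun i => ?_
    have hni : (⟨n, i⟩ : Σ n, Fin (m n)) ∉ C := by
      intro hmem
      exact (Finset.disjoint_left.mp ht hn)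
        (Finset.mem_image.2 ⟨⟨n, i⟩, hC.finite_of_discrete.mem_toFinset.2 hmem, rfl⟩)
    exact (hCx hni).le
  linarith

omit hdisj

theorem gfun_add (a b : C₀((Σ n, Fin (m n)), ℝ)) (n : ℕ) :
    gfun E m eqv (a + b) n = gfun E m eqv a n + gfun E m eqv b n := by
  have hb : blk m (a + b) n = blk m a n + blk m b n := by
    funext i
    simp [blk]
  unfold gfun
  rw [hb, map_add]

theorem gfun_smul (c : ℝ) (a : C₀((Σ n, Fin (m n)), ℝ)) (n : ℕ) :
    gfun E m eqv (c • a) n = c • gfun E m eqv a n := by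
  have hb : blk m (c • a) n = c • blk m a n := by
    funext i
    simp [blk]
  unfold gfun
  rw [hb, map_smul]

include hdisj in
theorem gfun_norm_le_tsum (a : C₀((Σ n, Fin (m n)), ℝ)) (n : ℕ) :
    ‖gfun E m eqv a n‖ ≤ ‖∑' k, gfun E m eqv a k‖ := by
  have hs := (gfun_summable E m eqv hdisj a).hasSum
  refine ge_of_tendsto hs.norm (eventually_atTop.2 ⟨{n}, fun s hsn => ?_⟩)
  exact disj_le_sum_norm s _ (fun i _ j _ hij => gfun_disj E m eqv hdisj a hij)
    (Finset.singleton_subset_iff.mp hsn)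

noncomputable def Umap : C₀((Σ n, Fin (m n)), ℝ) →ₗᵢ[ℝ] C(K, ℝ) where
  toFun := fun a => ∑' n, gfun E m eqv a n
  map_add' := fun a b => by
    have h : gfun E m eqv (a + b) = fun n => gfun E m eqv a n + gfun E m eqv b n :=
      funext (gfun_add E m eqv a b)
    show ∑' n, gfun E m eqv (a + b) n = _
    rw [h]
    exact Summable.tsum_add (gfun_summable E m eqv hdisj a) (gfun_summable E m eqv hdisj b)
  map_smul' := fun c a => by
    have h : gfun E m eqv (c • a) = fun n => c • gfun E m eqv a n :=
      funext (gfun_smul E m eqv c a)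
    show ∑' n, gfun E m eqv (c • a) n = _
    rw [h]
    exact ((gfun_summable E m eqv hdisj a).hasSum.const_smul c).tsum_eq
  norm_map' := fun a => by
    have hs := (gfun_summable E m eqv hdisj a).hasSum
    show ‖∑' n, gfun E m eqv a n‖ = ‖a‖
    refine le_antisymm ?_ ?_
    · refine le_of_tendsto' hs.norm fun s => ?_
      refine disj_sum_norm_le s _ (fun i _ j _ hij => gfun_disj E m eqv hdisj a hij)
        (norm_nonneg a) fun n _ => ?_
      rw [gfun_norm]
      exact blk_norm_le m a n
    · rw [← norm_toBCF_eq_norm]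
      refine (BoundedContinuousFunction.norm_le (norm_nonneg _)).2 ?_
      rintro ⟨n, i⟩
      calc ‖a.toBCF ⟨n, i⟩‖ = ‖blk m a n i‖ := rfl
      _ ≤ ‖blk m a n‖ := norm_le_pi_norm _ i
      _ = ‖gfun E m eqv a n‖ := (gfun_norm E m eqv a n).symm
      _ ≤ ‖∑' k, gfun E m eqv a k‖ := gfun_norm_le_tsum E m eqv hdisj a n

include hdisj

theorem Umap_mem_closure (a : C₀((Σ n, Fin (m n)), ℝ)) :
    Umap E m eqv hdisj a ∈ (⨆ n, E n : Submodule ℝ C(K, ℝ)).topologicalClosure := by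
  have hs := (gfun_summable E m eqv hdisj a).hasSum
  have hX : IsClosed ((⨆ n, E n : Submodule ℝ C(K, ℝ)).topologicalClosure : Set C(K, ℝ)) :=
    Submodule.isClosed_topologicalClosure _
  refine hX.mem_of_tendsto hs (Filter.Eventually.of_forall fun s => ?_)
  exact Submodule.sum_mem _ fun n _ => (Submodule.le_topologicalClosure _)
    (Submodule.mem_iSup_of_mem n (gfun_mem E m eqv a n))

theorem exists_preimage {n : ℕ} (x : C(K, ℝ)) (hx : x ∈ E n) :
    ∃ a : C₀((Σ k, Fin (m k)), ℝ), Umap E m eqv hdisj a = x := by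
  set v : Fin (m n) → ℝ := eqv n ⟨x, hx⟩ with hv
  set F : (Σ k, Fin (m k)) → ℝ :=
    fun p => if h : p.1 = n then v (Fin.cast (congrArg m h) p.2) else 0 with hF
  have hsupp : ∀ p : (Σ k, Fin (m k)), p.1 ≠ n → F p = 0 := fun p hp => dif_neg hp
  have hfin : ({p : (Σ k, Fin (m k)) | p.1 = n}).Finite := by
    refine Set.Finite.subset (Set.finite_range (Sigma.mk n)) ?_
    rintro ⟨pn, pi⟩ hp
    simp only [Set.mem_setOf_eq] at hp
    subst hp
    exact ⟨pi, rfl⟩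
  have hzero : Filter.Tendsto F (cocompact (Σ k, Fin (m k))) (𝓝 0) := by
    refine Filter.Tendsto.congr' ?_ tendsto_const_nhds
    rw [Filter.eventuallyEq_iff_exists_mem]
    refine ⟨{p : (Σ k, Fin (m k)) | p.1 = n}ᶜ, ?_, fun p hp => (hsupp p hp).symm⟩
    exact Filter.mem_cocompact.2 ⟨_, hfin.isCompact, subset_rfl⟩
  set a : C₀((Σ k, Fin (m k)), ℝ) := ⟨⟨F, continuous_of_discreteTopology⟩, hzero⟩ with ha
  refine ⟨a, ?_⟩
  have hblk_n : blk m a n = v := by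
    funext i
    show F ⟨n, i⟩ = v i
    rw [hF]
    simp only [dif_pos rfl]
    congr 1
  have hblk : ∀ k, k ≠ n → blk m a k = 0 := by
    intro k hk
    funext i
    exact hsupp ⟨k, i⟩ hk
  have hg : ∀ k, k ≠ n → gfun E m eqv a k = 0 := by
    intro k hk
    unfold gfun
    rw [hblk k hk, map_zero]
  have hgn : gfun E m eqv a n = x := by
    unfold gfun
    rw [hblk_n, hv]
    show ((E n).subtypeₗᵢ.comp (eqv n).symm.toLinearIsometry) (eqv n ⟨x, hx⟩) = x
    simp [LinearIsometry.coe_comp]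
  show ∑' k, gfun E m eqv a k = x
  rw [tsum_eq_single n (fun k hk => hg k hk), hgn]

theorem closure_subset_range :
    ((⨆ n, E n : Submodule ℝ C(K, ℝ)).topologicalClosure : Set C(K, ℝ)) ⊆
      Set.range (Umap E m eqv hdisj) := by
  have hclosed : IsClosed (Set.range (Umap E m eqv hdisj)) :=
    ((Umap E m eqv hdisj).isometry.isClosedEmbedding).isClosed_range
  rw [Submodule.topologicalClosure_coe]
  refine closure_minimal ?_ hclosed
  intro x hx
  have hle : (⨆ n, E n : Submodule ℝ C(K, ℝ)) ≤
      LinearMap.range (Umap E m eqv hdisj).toLinearMap := by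
    refine iSup_le fun n y hy => ?_
    obtain ⟨a, ha⟩ := exists_preimage E m eqv hdisj y hy
    exact ⟨a, ha⟩
  obtain ⟨a, ha⟩ := hle hx
  exact ⟨a, ha⟩

noncomputable def Vmap : C₀((Σ n, Fin (m n)), ℝ) →ₗᵢ[ℝ]
    (⨆ n, E n : Submodule ℝ C(K, ℝ)).topologicalClosure where
  toLinearMap := (Umap E m eqv hdisj).toLinearMap.codRestrict _
    (fun a => Umap_mem_closure E m eqv hdisj a)
  norm_map' := fun a => (Umap E m eqv hdisj).norm_map a

theorem Vmap_surjective : Function.Surjective (Vmap E m eqv hdisj) := by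
  rintro ⟨x, hx⟩
  obtain ⟨a, ha⟩ := closure_subset_range E m eqv hdisj hx
  exact ⟨a, Subtype.ext ha⟩

end blocks

section compequiv
variable {α β : Type*} [TopologicalSpace α] [DiscreteTopology α]
  [TopologicalSpace β] [DiscreteTopology β]

noncomputable def c0comp (e : β ≃ α) : C₀(α, ℝ) →ₗ[ℝ] C₀(β, ℝ) :=
  compLinearMap (Homeomorph.toCocompactMap
    (⟨e, continuous_of_discreteTopology, continuous_of_discreteTopology⟩ : β ≃ₜ α))

theorem c0comp_apply (e : β ≃ α) (f : C₀(α, ℝ)) (x : β) : c0comp e f x = f (e x) := rfl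

theorem c0comp_norm_le (e : β ≃ α) (f : C₀(α, ℝ)) : ‖c0comp e f‖ ≤ ‖f‖ := by
  rw [← norm_toBCF_eq_norm, ← norm_toBCF_eq_norm]
  refine (BoundedContinuousFunction.norm_le (norm_nonneg _)).2 fun x => ?_
  exact f.toBCF.norm_coe_le_norm (e x)

noncomputable def c0CompEquiv (e : α ≃ β) : C₀(α, ℝ) ≃ₗᵢ[ℝ] C₀(β, ℝ) where
  toLinearEquiv := LinearEquiv.ofLinear (c0comp e.symm) (c0comp e)
    (by
      refine LinearMap.ext fun f => DFunLike.ext _ _ fun x => ?_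
      show f (e (e.symm x)) = f x
      rw [e.apply_symm_apply])
    (by
      refine LinearMap.ext fun f => DFunLike.ext _ _ fun x => ?_
      show f (e.symm (e x)) = f x
      rw [e.symm_apply_apply])
  norm_map' := fun f => by
    refine le_antisymm (c0comp_norm_le e.symm f) ?_
    have : f = c0comp e (c0comp e.symm f) := by
      refine DFunLike.ext _ _ fun x => ?_
      show f x = f (e.symm (e x))
      rw [e.symm_apply_apply]
    calc ‖f‖ = ‖c0comp e (c0comp e.symm f)‖ := by rw [← this]
    _ ≤ ‖c0comp e.symm f‖ := c0comp_norm_le e _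

end compequiv

theorem blocks_c0 {K : Type*} [TopologicalSpace K] [CompactSpace K]
    (E : ℕ → Submodule ℝ C(K, ℝ))
    (hdisj : ∀ m n, m ≠ n → ∀ f ∈ E m, ∀ g ∈ E n, f * g = 0)
    (m : ℕ → ℕ) (hm : ∀ n, 0 < m n)
    (eqv : ∀ n, E n ≃ₗᵢ[ℝ] (Fin (m n) → ℝ)) :
    Nonempty ((⨆ n, E n : Submodule ℝ C(K, ℝ)).topologicalClosure ≃L[ℝ] C₀(ℕ, ℝ)) := by
  haveI : Infinite (Σ n, Fin (m n)) :=
    Infinite.of_injective (fun n => ⟨n, ⟨0, hm n⟩⟩) (fun a b h => congrArg Sigma.fst h)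
  obtain ⟨e⟩ : Nonempty ((Σ n, Fin (m n)) ≃ ℕ) := nonempty_equiv_of_countable
  have eL := LinearIsometryEquiv.ofSurjective (Vmap E m eqv hdisj) (Vmap_surjective E m eqv hdisj)
  exact ⟨(eL.symm.trans (c0CompEquiv e)).toContinuousLinearEquiv⟩

theorem disjoint_linfty_blocks {K : Type*} [TopologicalSpace K] [CompactSpace K] [T2Space K]
    {Y : Type*} [NormedAddCommGroup Y] [NormedSpace ℝ Y] [CompleteSpace Y]
    (Ω : C(K, ℝ) → Y) (hΩ : ∃ Q : ℝ, 0 ≤ Q ∧ IsQuasiLinearWith Ω Q)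
    (E : ℕ → Submodule ℝ C(K, ℝ)) (hfin : ∀ n, FiniteDimensional ℝ (E n))
    (hdisj : ∀ m n, m ≠ n → ∀ f ∈ E m, ∀ g ∈ E n, f * g = 0)
    (hiso : ∀ n, ∃ m : ℕ, Nonempty (E n ≃ₗᵢ[ℝ] (Fin m → ℝ)))
    (hnontriv : ∀ n : ℕ, ¬ IsTrivialOn Ω (n : ℝ) (E n)) :
    Nonempty ((⨆ n, E n : Submodule ℝ C(K, ℝ)).topologicalClosure ≃L[ℝ] C₀(ℕ, ℝ)) ∧
    ¬ IsLocallyTrivialOn Ω (⨆ n, E n : Submodule ℝ C(K, ℝ)).topologicalClosure := by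
  obtain ⟨Q, hQ0, hhom, hquad⟩ := hΩ
  have hΩ0 : Ω 0 = 0 := by simpa using hhom 0 0
  choose m eqv0 using hiso
  have hm : ∀ n, 0 < m n := by
    intro n
    by_contra h
    push_neg at h
    have hmn : m n = 0 := Nat.le_zero.mp h
    haveI : IsEmpty (Fin (m n)) := by rw [hmn]; infer_instance
    haveI : Subsingleton (Fin (m n) → ℝ) := ⟨fun f g => funext fun i => (IsEmpty.false i).elim⟩
    apply hnontriv n
    refine ⟨0, fun x => ?_⟩
    have hx0 : x = 0 := (eqv0 n).some.injective (Subsingleton.elim _ _)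
    rw [hx0]
    simp [hΩ0]
  constructor
  · exact blocks_c0 E hdisj m hm (fun n => (eqv0 n).some)
  · rintro ⟨lam, hl⟩
    obtain ⟨n, hn⟩ := exists_nat_ge lam
    obtain ⟨L, hL⟩ := hl (E n) ((le_iSup E n).trans (Submodule.le_topologicalClosure _)) (hfin n)
    exact hnontriv n ⟨L, fun x => (hL x).trans (mul_le_mul_of_nonneg_right hn (norm_nonneg _))⟩
end

section
/- Let q : ℓ₁ → c₀ be any bounded linear surjection. Then the exact sequence 0 → ker q → ℓ₁ → c₀ → 0 is not locally trivial: there is no constant λ such that for every finite-dimensional subspace F of c₀ there exists a linear map T : F → ℓ₁ with q(T(x)) = x for all x ∈ F and ‖T‖ ≤ λ. -/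
/-!
If `q` had lifts `T` with `‖T‖ ≤ λ` on every finite-dimensional subspace of `c₀`, take the span of
the first `n` unit vectors `eᵢ` and put `uᵢ = T eᵢ ∈ ℓ₁`. Then `1 ≤ ‖q‖ ‖uᵢ‖`, while every sign
combination `∑ ±uᵢ` has norm at most `λ`, because `∑ ±eᵢ` has sup norm `1`. In `ℓ₁` the average of
`‖∑ ±uᵢ‖` over all signs is at least `4/9 · (∑ ‖uᵢ‖²)^{1/2}` (Khintchine's inequality in each
coordinate followed by Minkowski's inequality; `ℓ₁` has cotype 2), which is at least
`4/9 · √n / ‖q‖`. Hence `‖q‖ λ ≥ 4/9 · √n` for every `n`, which is absurd.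
-/

open scoped ZeroAtInfty

/-- The sequence space `ℓ₁`. -/
noncomputable abbrev ellOne := lp (fun _ : ℕ => ℝ) 1

noncomputable def boolSign (b : Bool) : ℝ := if b then 1 else -1

@[simp] lemma boolSign_true : boolSign true = 1 := rfl
@[simp] lemma boolSign_false : boolSign false = -1 := rfl

lemma abs_boolSign (b : Bool) : |boolSign b| = 1 := by cases b <;> simp

noncomputable def rademacherSum {n : ℕ} (ε : Fin n → Bool) (a : Fin n → ℝ) : ℝ :=
  ∑ i, boolSign (ε i) * a i

lemma rademacherSum_cons {n : ℕ} (b : Bool) (ε : Fin n → Bool) (a : Fin (n + 1) → ℝ) :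
    rademacherSum (Fin.cons b ε) a = boolSign b * a 0 + rademacherSum ε (Fin.tail a) := by
  simp [rademacherSum, Fin.sum_univ_succ, Fin.tail]

lemma sum_fun_bool_succ {M : Type*} [AddCommMonoid M] {n : ℕ} (f : (Fin (n + 1) → Bool) → M) :
    ∑ ε, f ε = ∑ ε : Fin n → Bool, (f (Fin.cons true ε) + f (Fin.cons false ε)) := by
  rw [← Fintype.sum_equiv (Fin.consEquiv fun _ => Bool) (fun p => f (Fin.cons p.1 p.2)) f
    fun _ => rfl, Fintype.sum_prod_type_right]
  simp

theorem sum_rademacherSum_sq {n : ℕ} (a : Fin n → ℝ) :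
    ∑ ε : Fin n → Bool, rademacherSum ε a ^ 2 = 2 ^ n * ∑ i, a i ^ 2 := by
  induction n with
  | zero => simp [rademacherSum]
  | succ n ih =>
    have pair (x y : ℝ) : (1 * x + y) ^ 2 + (-1 * x + y) ^ 2 = 2 * x ^ 2 + 2 * y ^ 2 := by ring
    simp only [sum_fun_bool_succ, rademacherSum_cons, boolSign_true, boolSign_false, pair,
      Finset.sum_add_distrib, ← Finset.mul_sum, ih, Fin.sum_univ_succ (fun i => a i ^ 2)]
    simp [Fin.tail, pow_succ]
    ring

theorem sum_rademacherSum_pow_four_le {n : ℕ} (a : Fin n → ℝ) :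
    ∑ ε : Fin n → Bool, rademacherSum ε a ^ 4 ≤ 3 * 2 ^ n * (∑ i, a i ^ 2) ^ 2 := by
  induction n with
  | zero => simp [rademacherSum]
  | succ n ih =>
    have pair (x y : ℝ) : (1 * x + y) ^ 4 + (-1 * x + y) ^ 4
        = 2 * x ^ 4 + 12 * x ^ 2 * y ^ 2 + 2 * y ^ 4 := by ring
    simp only [sum_fun_bool_succ, rademacherSum_cons, boolSign_true, boolSign_false, pair,
      Finset.sum_add_distrib, ← Finset.mul_sum, sum_rademacherSum_sq,
      Fin.sum_univ_succ (fun i => a i ^ 2)]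
    simp only [Finset.sum_const, Finset.card_univ, Fintype.card_fun, Fintype.card_bool,
      Fintype.card_fin, nsmul_eq_mul, Nat.cast_pow, Nat.cast_ofNat, pow_succ (2 : ℝ) n, Fin.tail]
    set s := ∑ i : Fin n, a i.succ ^ 2
    have ih' : ∑ ε, rademacherSum ε (Fin.tail a) ^ 4 ≤ 3 * 2 ^ n * s ^ 2 := ih (Fin.tail a)
    have hs : 0 ≤ s := Finset.sum_nonneg fun i _ => sq_nonneg _
    have h2n : (0 : ℝ) ≤ 2 ^ n := by positivity
    nlinarith [mul_nonneg h2n (pow_nonneg (sq_nonneg (a 0)) 2),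
      mul_nonneg h2n (mul_nonneg (sq_nonneg (a 0)) hs)]

/- With `t = 3σ/2` this turns the second and fourth moments of a Rademacher sum of variance `σ²`
into a lower bound on its first absolute moment. For `y = |x|` the certificate is
`y⁴ - 4t²y² + 4t³y = y²(y - 2t)² + 4ty(y - t)²`. -/
lemma four_mul_sq_mul_sq_sub_pow_four_le {t : ℝ} (ht : 0 ≤ t) (x : ℝ) :
    4 * t ^ 2 * x ^ 2 - x ^ 4 ≤ 4 * t ^ 3 * |x| := by
  have hx2 : x ^ 2 = |x| ^ 2 := (sq_abs x).symm
  have hx4 : x ^ 4 = (|x| ^ 2) ^ 2 := by rw [sq_abs]; ring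
  rw [hx2, hx4]
  nlinarith [sq_nonneg (|x| * (|x| - 2 * t)),
    mul_nonneg (mul_nonneg ht (abs_nonneg x)) (sq_nonneg (|x| - t))]

theorem khintchine_lower_bound {n : ℕ} (a : Fin n → ℝ) :
    4 / 9 * 2 ^ n * √(∑ i, a i ^ 2) ≤ ∑ ε : Fin n → Bool, |rademacherSum ε a| := by
  set σ := √(∑ i, a i ^ 2)
  have hσ2 : σ ^ 2 = ∑ i, a i ^ 2 := Real.sq_sqrt (Finset.sum_nonneg fun i _ => sq_nonneg _)
  have hσ0 : 0 ≤ σ := Real.sqrt_nonneg _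
  clear_value σ
  rcases hσ0.eq_or_lt with hσ | hσ
  · rw [← hσ, mul_zero]
    exact Finset.sum_nonneg fun ε _ => abs_nonneg _
  have ht : 0 ≤ 3 * σ / 2 := by positivity
  have pointwise := Finset.sum_le_sum fun ε (_ : ε ∈ Finset.univ) =>
    four_mul_sq_mul_sq_sub_pow_four_le ht (rademacherSum ε a)
  rw [Finset.sum_sub_distrib, ← Finset.mul_sum, ← Finset.mul_sum, sum_rademacherSum_sq,
    ← hσ2] at pointwise
  have fourth := sum_rademacherSum_pow_four_le a
  rw [← hσ2] at fourth
  refine le_of_mul_le_mul_left ?_ (pow_pos hσ 3)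
  linarith

open Filter Topology

lemma sqrt_sum_sq_sum_abs_le_sum_sqrt_sum_sq {ι κ : Type*} [Fintype ι] (s : Finset κ)
    (a : κ → ι → ℝ) :
    √(∑ i, (∑ k ∈ s, |a k i|) ^ 2) ≤ ∑ k ∈ s, √(∑ i, a k i ^ 2) := by
  let v : κ → EuclideanSpace ℝ ι := fun k => WithLp.toLp 2 fun i => |a k i|
  have norm_v (k : κ) : ‖v k‖ = √(∑ i, a k i ^ 2) := by
    simp [v, EuclideanSpace.norm_eq]
  have norm_sum_v : ‖∑ k ∈ s, v k‖ = √(∑ i, (∑ k ∈ s, |a k i|) ^ 2) := by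
    simp [v, EuclideanSpace.norm_eq, WithLp.ofLp_sum, abs_of_nonneg, Finset.sum_nonneg]
  rw [← norm_sum_v, ← Finset.sum_congr rfl fun k _ => norm_v k]
  exact norm_sum_le s v

theorem lp_one_cotype_two {ι : Type*} {n : ℕ} (u : Fin n → lp (fun _ : ι => ℝ) 1) :
    4 / 9 * 2 ^ n * √(∑ i, ‖u i‖ ^ 2)
      ≤ ∑ ε : Fin n → Bool, ‖∑ i, boolSign (ε i) • u i‖ := by
  have partial_sums (i : Fin n) :
      Tendsto (fun s : Finset ι => ∑ k ∈ s, |u i k|) atTop (𝓝 ‖u i‖) := by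
    exact (show HasSum (fun k => |u i k|) ‖u i‖ by
      simpa [Real.norm_eq_abs] using lp.hasSum_norm (p := 1) (by norm_num) (u i))
  refine le_of_tendsto
    (((tendsto_finsetSum _ fun i _ => (partial_sums i).pow 2).sqrt).const_mul _)
    (Eventually.of_forall fun s => ?_)
  calc 4 / 9 * 2 ^ n * √(∑ i, (∑ k ∈ s, |u i k|) ^ 2)
      ≤ 4 / 9 * 2 ^ n * ∑ k ∈ s, √(∑ i, u i k ^ 2) := by
        gcongr
        exact sqrt_sum_sq_sum_abs_le_sum_sqrt_sum_sq s fun k i => u i k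
    _ ≤ ∑ k ∈ s, ∑ ε : Fin n → Bool, |rademacherSum ε fun i => u i k| := by
        rw [Finset.mul_sum]
        exact Finset.sum_le_sum fun k _ => khintchine_lower_bound _
    _ = ∑ ε : Fin n → Bool, ∑ k ∈ s, |(∑ i, boolSign (ε i) • u i : lp _ 1) k| := by
        rw [Finset.sum_comm]
        refine Finset.sum_congr rfl fun ε _ => Finset.sum_congr rfl fun k _ => ?_
        rw [lp.coeFn_sum, Finset.sum_apply]
        rfl
    _ ≤ ∑ ε : Fin n → Bool, ‖∑ i, boolSign (ε i) • u i‖ := by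
        refine Finset.sum_le_sum fun ε _ => ?_
        simpa [Real.norm_eq_abs] using
          lp.sum_rpow_le_norm_rpow (p := 1) (by norm_num) (∑ i, boolSign (ε i) • u i) s

theorem sqrt_le_opNorm_mul_of_norm_sign_sum_le {ι E : Type*} [NormedAddCommGroup E]
    [NormedSpace ℝ E] (q : lp (fun _ : ι => ℝ) 1 →L[ℝ] E) {n : ℕ}
    (u : Fin n → lp (fun _ : ι => ℝ) 1) {lam : ℝ} (hu : ∀ i, 1 ≤ ‖q (u i)‖)
    (hsign : ∀ ε : Fin n → Bool, ‖∑ i, boolSign (ε i) • u i‖ ≤ lam) :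
    4 / 9 * √n ≤ ‖q‖ * lam := by
  have sqrt_n_le : √n ≤ ‖q‖ * √(∑ i, ‖u i‖ ^ 2) := by
    have hsum : (n : ℝ) ≤ ‖q‖ ^ 2 * ∑ i, ‖u i‖ ^ 2 := calc
      (n : ℝ) = ∑ _i : Fin n, 1 := by simp
      _ ≤ ∑ i, (‖q‖ * ‖u i‖) ^ 2 :=
        Finset.sum_le_sum fun i _ => one_le_pow₀ ((hu i).trans (q.le_opNorm (u i)))
      _ = ‖q‖ ^ 2 * ∑ i, ‖u i‖ ^ 2 := by simp only [mul_pow, Finset.mul_sum]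
    calc √n ≤ √(‖q‖ ^ 2 * ∑ i, ‖u i‖ ^ 2) := Real.sqrt_le_sqrt hsum
      _ = ‖q‖ * √(∑ i, ‖u i‖ ^ 2) := by
        rw [Real.sqrt_mul (sq_nonneg _), Real.sqrt_sq (norm_nonneg q)]
  have sum_le : ∑ ε : Fin n → Bool, ‖∑ i, boolSign (ε i) • u i‖ ≤ 2 ^ n * lam :=
    (Finset.sum_le_sum fun ε _ => hsign ε).trans_eq (by simp)
  have key := mul_le_mul_of_nonneg_left ((lp_one_cotype_two u).trans sum_le) (norm_nonneg q)
  have h2n : (0 : ℝ) < 2 ^ n := by positivity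
  refine le_of_mul_le_mul_left ?_ h2n
  nlinarith [mul_le_mul_of_nonneg_left sqrt_n_le (by positivity : (0 : ℝ) ≤ 4 / 9 * 2 ^ n)]

namespace ZeroAtInftyContinuousMap

variable {α : Type*} [TopologicalSpace α]

lemma finset_sum_apply {ι : Type*} (s : Finset ι) (f : ι → C₀(α, ℝ)) (x : α) :
    (∑ i ∈ s, f i) x = ∑ i ∈ s, f i x :=
  map_sum (AddMonoidHom.mk' (fun g : C₀(α, ℝ) => g x) fun _ _ => rfl) f s

lemma norm_le_of_forall_abs_le {f : C₀(α, ℝ)} {C : ℝ} (hC : 0 ≤ C) (h : ∀ x, |f x| ≤ C) :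
    ‖f‖ ≤ C := by
  rw [← norm_toBCF_eq_norm]
  exact (BoundedContinuousFunction.norm_le hC).2 h

variable [DiscreteTopology α] [DecidableEq α]

noncomputable def single (a : α) : C₀(α, ℝ) where
  toFun x := if x = a then 1 else 0
  continuous_toFun := continuous_of_discreteTopology
  zero_at_infty' := by
    rw [cocompact_eq_cofinite]
    exact tendsto_const_nhds.congr' <| (Set.finite_singleton a).eventually_cofinite_notMem.mono
      fun x hx => (if_neg hx).symm

lemma single_apply (a x : α) : single a x = if x = a then 1 else 0 := rfl

lemma norm_single (a : α) : ‖single a‖ = 1 := by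
  refine le_antisymm (norm_le_of_forall_abs_le zero_le_one fun x => ?_) ?_
  · rw [single_apply]
    split_ifs <;> simp
  · simpa [single_apply] using (single a).toBCF.norm_coe_le_norm a

lemma norm_sum_smul_single_le {ι : Type*} [Fintype ι] {x : ι → α} (hx : x.Injective)
    {s : ι → ℝ} (hs : ∀ i, |s i| ≤ 1) : ‖∑ i, s i • single (x i)‖ ≤ 1 := by
  refine norm_le_of_forall_abs_le zero_le_one fun y => ?_
  simp only [finset_sum_apply, smul_apply, single_apply, smul_eq_mul]
  by_cases hy : ∃ i, x i = y
  · obtain ⟨i, rfl⟩ := hy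
    rw [Finset.sum_eq_single i (fun j _ hji => by simp [(hx.ne hji).symm]) (by simp)]
    simpa using hs i
  · push Not at hy
    simp [fun i => (hy i).symm]

end ZeroAtInftyContinuousMap

open ZeroAtInftyContinuousMap in
theorem quotient_ell1_onto_c0_not_locally_trivial_general
    (q : ellOne →L[ℝ] C₀(ℕ, ℝ)) :
    ¬ ∃ lam : ℝ, ∀ F : Submodule ℝ C₀(ℕ, ℝ), FiniteDimensional ℝ F →
      ∃ T : F →ₗ[ℝ] ellOne,
        (∀ x : F, q (T x) = (x : C₀(ℕ, ℝ))) ∧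
        ∀ x : F, ‖T x‖ ≤ lam * ‖(x : C₀(ℕ, ℝ))‖ := by
  rintro ⟨lam, hlam⟩
  obtain ⟨n, hn0, hn⟩ : ∃ n : ℕ, 0 < n ∧ 9 / 4 * (‖q‖ * lam) < √n :=
    ((eventually_gt_atTop 0).and ((Real.tendsto_sqrt_atTop.comp
      tendsto_natCast_atTop_atTop).eventually_gt_atTop _)).exists
  let F := Submodule.span ℝ (Set.range fun i : Fin n => single (i : ℕ))
  obtain ⟨T, hqT, hT⟩ := hlam F (FiniteDimensional.span_of_finite ℝ (Set.finite_range _))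
  let e (i : Fin n) : F := ⟨single (i : ℕ), Submodule.subset_span ⟨i, rfl⟩⟩
  have hlam0 : 0 ≤ lam := by
    simpa [e, norm_single] using (norm_nonneg _).trans (hT (e ⟨0, hn0⟩))
  have hsign (ε : Fin n → Bool) : ‖∑ i, boolSign (ε i) • T (e i)‖ ≤ lam := calc
    _ = ‖T (∑ i, boolSign (ε i) • e i)‖ := by simp only [map_sum, map_smul]
    _ ≤ lam * ‖((∑ i, boolSign (ε i) • e i : F) : C₀(ℕ, ℝ))‖ := hT _
    _ = lam * ‖∑ i, boolSign (ε i) • single (i : ℕ)‖ := by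
      simp only [Submodule.coe_sum, Submodule.coe_smul, e]
    _ ≤ lam := mul_le_of_le_one_right hlam0
      (norm_sum_smul_single_le Fin.val_injective fun i => (abs_boolSign _).le)
  have hu (i : Fin n) : 1 ≤ ‖q (T (e i))‖ := by simp [hqT, e, norm_single]
  have := sqrt_le_opNorm_mul_of_norm_sign_sum_le q _ hu hsign
  linarith

theorem quotient_ell1_onto_c0_not_locally_trivial
    (q : ellOne →L[ℝ] C₀(ℕ, ℝ)) (hq : Function.Surjective q) :
    ¬ ∃ lam : ℝ, ∀ F : Submodule ℝ C₀(ℕ, ℝ), FiniteDimensional ℝ F →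
      ∃ T : F →ₗ[ℝ] ellOne,
        (∀ x : F, q (T x) = (x : C₀(ℕ, ℝ))) ∧
        ∀ x : F, ‖T x‖ ≤ lam * ‖(x : C₀(ℕ, ℝ))‖ :=
  quotient_ell1_onto_c0_not_locally_trivial_general q
end
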